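/- Lower bound for the Jackson integral of the kernel (inequality (2.9) of the paper): for λ > 0, ∫_0^T Γ_{υ,λ}(s) d_q s ≥ Γ_{υ,λ}(T)/(λβ) − 1/(λβ)·Γ_{υ,λ}(0), i.e. since Γ_{υ,λ}(0) = 1, ∫_0^T Γ_{υ,λ}(s) d_q s ≥ (Γ_{υ,λ}(T) − 1)/(λβ); in particular ∫_0^T Γ_{υ,λ}(s) d_q s ≥ Γ_{υ,λ}(T)/(λβ) − 1/(λβ). -/

import Mathlib

open scoped BigOperators InnerProductSpace

noncomputable def qDeriv (q : ℝ) (f : ℝ → ℝ) (t : ℝ) : ℝ :=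
  (f t - f (q * t)) / ((1 - q) * t)

noncomputable def qDerivC (q : ℝ) (f : ℝ → ℂ) (t : ℝ) : ℂ :=
  (f t - f (q * t)) / (((1 - q) * t : ℝ) : ℂ)

noncomputable def jacksonIntegral (q x : ℝ) (f : ℝ → ℝ) : ℝ :=
  (1 - q) * x * ∑' m : ℕ, q ^ m * f (q ^ m * x)

noncomputable def jacksonIntegralC (q x : ℝ) (f : ℝ → ℂ) : ℂ :=
  (((1 - q) * x : ℝ) : ℂ) * ∑' m : ℕ, (q : ℂ) ^ m * f (q ^ m * x)

noncomputable def qGamma (q lam : ℝ) (v : ℝ → ℝ) (t : ℝ) : ℝ :=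
  ∏' i : ℕ, (1 + (1 - q) * lam * q ^ i * t * v (q ^ i * t))

noncomputable def qFact (q : ℝ) (k : ℕ) : ℝ :=
  ∏ j ∈ Finset.range k, ((1 - q ^ (j + 1)) / (1 - q))

noncomputable def qExp (q x : ℝ) : ℝ :=
  ∑' k : ℕ, q ^ (k * (k - 1) / 2) * x ^ k / qFact q k

noncomputable def qDerivH (q : ℝ) {H : Type*} [NormedAddCommGroup H] [NormedSpace ℂ H]
    (u : ℝ → H) (t : ℝ) : H :=
  (((1 - q) * t)⁻¹ : ℝ) • (u t - u (q * t))

noncomputable def sobNormSq {H : Type*} [NormedAddCommGroup H] [InnerProductSpace ℂ H]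
    {I : Type*} (e : HilbertBasis I ℂ H) (lam : I → ℝ) (d : ℝ) (u : H) : ℝ :=
  ∑' k, lam k ^ d * ‖⟪e k, u⟫_ℂ‖ ^ 2

def sobMem {H : Type*} [NormedAddCommGroup H] [InnerProductSpace ℂ H]
    {I : Type*} (e : HilbertBasis I ℂ H) (lam : I → ℝ) (d : ℝ) (u : H) : Prop :=
  Summable (fun k => lam k ^ d * ‖⟪e k, u⟫_ℂ‖ ^ 2)


/-!
Writing `Γ` for `qGamma q lam v`, peeling off the first factor of the product gives the
functional equation `Γ t = (1 + (1 - q) λ t v(t)) Γ (q t)`. Since `Γ (q t) ≤ Γ t`, this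
yields `Γ t - Γ (q t) ≤ (1 - q) λ β t Γ t`. Summing this over the points `t = q^m T`
telescopes to `Γ T - Γ (q^N T) ≤ λ β ∫_0^T Γ d_q s`, and
`Γ (q^N T) ≤ exp (λ β q^N T) → 1`.
-/

open Set Filter Topology

noncomputable def qGammaTerm (q lam : ℝ) (v : ℝ → ℝ) (t : ℝ) (i : ℕ) : ℝ :=
  (1 - q) * lam * q ^ i * t * v (q ^ i * t)

lemma pow_mul_mem_Icc {q t : ℝ} (hq0 : 0 ≤ q) (hq1 : q ≤ 1) (ht : 0 ≤ t) (i : ℕ) :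
    q ^ i * t ∈ Icc 0 t :=
  ⟨by positivity, mul_le_of_le_one_left ht (pow_le_one₀ hq0 hq1)⟩

lemma sub_le_tsum_of_sub_succ_le {G u : ℕ → ℝ} (hu : Summable u) (hu0 : ∀ m, 0 ≤ u m)
    (h : ∀ m, G m - G (m + 1) ≤ u m) (N : ℕ) : G 0 - G N ≤ ∑' m, u m :=
  calc G 0 - G N = ∑ m ∈ Finset.range N, (G m - G (m + 1)) := (Finset.sum_range_sub' G N).symm
    _ ≤ ∑ m ∈ Finset.range N, u m := Finset.sum_le_sum fun m _ => h m
    _ ≤ ∑' m, u m := hu.sum_le_tsum _ fun m _ => hu0 m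

section

variable {q lam β t T : ℝ} {v : ℝ → ℝ}

lemma qGammaTerm_nonneg (hq0 : 0 ≤ q) (hq1 : q ≤ 1) (hlam : 0 ≤ lam) (ht : 0 ≤ t)
    (hv : ∀ s ∈ Icc 0 t, 0 ≤ v s) (i : ℕ) : 0 ≤ qGammaTerm q lam v t i := by
  have hvi := hv _ (pow_mul_mem_Icc hq0 hq1 ht i)
  have hq : 0 ≤ 1 - q := by linarith
  unfold qGammaTerm
  positivity

lemma qGammaTerm_le (hq0 : 0 ≤ q) (hq1 : q ≤ 1) (hlam : 0 ≤ lam) (ht : 0 ≤ t)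
    (hv : ∀ s ∈ Icc 0 t, v s ≤ β) (i : ℕ) :
    qGammaTerm q lam v t i ≤ (1 - q) * (lam * β * t) * q ^ i := by
  have hvi := hv _ (pow_mul_mem_Icc hq0 hq1 ht i)
  have hq : 0 ≤ 1 - q := by linarith
  calc qGammaTerm q lam v t i = (1 - q) * lam * q ^ i * t * v (q ^ i * t) := rfl
    _ ≤ (1 - q) * lam * q ^ i * t * β := by gcongr
    _ = (1 - q) * (lam * β * t) * q ^ i := by ring

lemma summable_qGammaTerm (hq0 : 0 ≤ q) (hq1 : q < 1) (hlam : 0 ≤ lam) (ht : 0 ≤ t)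
    (hv : ∀ s ∈ Icc 0 t, 0 ≤ v s ∧ v s ≤ β) : Summable (qGammaTerm q lam v t) :=
  .of_nonneg_of_le (qGammaTerm_nonneg hq0 hq1.le hlam ht fun s hs => (hv s hs).1)
    (qGammaTerm_le hq0 hq1.le hlam ht fun s hs => (hv s hs).2)
    ((summable_geometric_of_lt_one hq0 hq1).mul_left _)

lemma tsum_qGammaTerm_le (hq0 : 0 ≤ q) (hq1 : q < 1) (hlam : 0 ≤ lam) (ht : 0 ≤ t)
    (hv : ∀ s ∈ Icc 0 t, 0 ≤ v s ∧ v s ≤ β) :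
    ∑' i, qGammaTerm q lam v t i ≤ lam * β * t := by
  have hq : 1 - q ≠ 0 := by linarith
  calc ∑' i, qGammaTerm q lam v t i ≤ ∑' i, (1 - q) * (lam * β * t) * q ^ i :=
        (summable_qGammaTerm hq0 hq1 hlam ht hv).tsum_le_tsum
          (qGammaTerm_le hq0 hq1.le hlam ht fun s hs => (hv s hs).2)
          ((summable_geometric_of_lt_one hq0 hq1).mul_left _)
    _ = lam * β * t := by
      rw [tsum_mul_left, tsum_geometric_of_lt_one hq0 hq1]
      field_simp

lemma qGamma_nonneg (hq0 : 0 ≤ q) (hq1 : q ≤ 1) (hlam : 0 ≤ lam) (ht : 0 ≤ t)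
    (hv : ∀ s ∈ Icc 0 t, 0 ≤ v s) : 0 ≤ qGamma q lam v t :=
  tprod_nonneg fun i => add_nonneg zero_le_one (qGammaTerm_nonneg hq0 hq1 hlam ht hv i)

lemma qGamma_le_exp (hq0 : 0 ≤ q) (hq1 : q < 1) (hlam : 0 ≤ lam) (ht : 0 ≤ t)
    (hv : ∀ s ∈ Icc 0 t, 0 ≤ v s ∧ v s ≤ β) :
    qGamma q lam v t ≤ Real.exp (lam * β * t) := by
  have hnonneg := qGammaTerm_nonneg hq0 hq1.le hlam ht fun s hs => (hv s hs).1
  have hsum := summable_qGammaTerm hq0 hq1 hlam ht hv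
  calc qGamma q lam v t = ∏' i, (1 + qGammaTerm q lam v t i) := rfl
    _ ≤ Real.exp (∑' i, qGammaTerm q lam v t i) :=
      tprod_le_of_prod_le' (Real.one_le_exp (tsum_nonneg hnonneg)) fun s =>
        (Real.prod_one_add_le_exp_sum s hnonneg).trans
          (Real.exp_le_exp.2 (hsum.sum_le_tsum s fun i _ => hnonneg i))
    _ ≤ Real.exp (lam * β * t) := Real.exp_le_exp.2 (tsum_qGammaTerm_le hq0 hq1 hlam ht hv)

lemma qGamma_eq_mul_qGamma_mul (h : Multipliable fun i => 1 + qGammaTerm q lam v (q * t) i) :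
    qGamma q lam v t = (1 + (1 - q) * lam * t * v t) * qGamma q lam v (q * t) := by
  have hshift : ∀ i, qGammaTerm q lam v t (i + 1) = qGammaTerm q lam v (q * t) i := fun i => by
    simp only [qGammaTerm, pow_succ, mul_assoc]
  have hmul : Multipliable fun i => 1 + qGammaTerm q lam v t (i + 1) := by
    simpa only [hshift] using h
  calc qGamma q lam v t = ∏' i, (1 + qGammaTerm q lam v t i) := rfl
    _ = (1 + qGammaTerm q lam v t 0) * ∏' i, (1 + qGammaTerm q lam v t (i + 1)) :=
      tprod_eq_zero_mul' hmul
    _ = (1 + qGammaTerm q lam v t 0) * qGamma q lam v (q * t) := by simp only [hshift]; rfl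
    _ = _ := by simp only [qGammaTerm, pow_zero, one_mul, mul_one]

lemma qGamma_sub_qGamma_mul_le (hq0 : 0 ≤ q) (hq1 : q < 1)
    (hlam : 0 ≤ lam) (ht : 0 ≤ t) (hv : ∀ s ∈ Icc 0 t, 0 ≤ v s ∧ v s ≤ β) :
    qGamma q lam v t - qGamma q lam v (q * t) ≤ (1 - q) * lam * β * t * qGamma q lam v t := by
  have hqt : 0 ≤ q * t := by positivity
  have hv' : ∀ s ∈ Icc 0 (q * t), 0 ≤ v s ∧ v s ≤ β := fun s hs =>
    hv s (Icc_subset_Icc_right (mul_le_of_le_one_left ht hq1.le) hs)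
  have hfeq := qGamma_eq_mul_qGamma_mul
    (Real.multipliable_one_add_of_summable (summable_qGammaTerm hq0 hq1 hlam hqt hv'))
  have hΓqt := qGamma_nonneg hq0 hq1.le hlam hqt fun s hs => (hv' s hs).1
  have hvt := hv t ⟨ht, le_rfl⟩
  have hq : 0 ≤ 1 - q := by linarith
  have hx0 : 0 ≤ (1 - q) * lam * t * v t := by have := hvt.1; positivity
  have hxβ : (1 - q) * lam * t * v t ≤ (1 - q) * lam * β * t := by
    have := hvt.2
    calc (1 - q) * lam * t * v t ≤ (1 - q) * lam * t * β := by gcongr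
      _ = (1 - q) * lam * β * t := by ring
  have hmono : qGamma q lam v (q * t) ≤ qGamma q lam v t := by
    rw [hfeq]
    exact le_mul_of_one_le_left hΓqt (by linarith)
  calc qGamma q lam v t - qGamma q lam v (q * t)
      = (1 - q) * lam * t * v t * qGamma q lam v (q * t) := by rw [hfeq]; ring
    _ ≤ (1 - q) * lam * β * t * qGamma q lam v t :=
      mul_le_mul hxβ hmono hΓqt (hx0.trans hxβ)

lemma summable_pow_mul_qGamma_pow_mul (hq0 : 0 ≤ q) (hq1 : q < 1)
    (hlam : 0 ≤ lam) (hT : 0 ≤ T) (hv : ∀ s ∈ Icc 0 T, 0 ≤ v s ∧ v s ≤ β) :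
    Summable fun m : ℕ => q ^ m * qGamma q lam v (q ^ m * T) := by
  have hβ : 0 ≤ β := (hv T ⟨hT, le_rfl⟩).1.trans (hv T ⟨hT, le_rfl⟩).2
  refine .of_nonneg_of_le (fun m => ?_) (fun m => ?_)
    ((summable_geometric_of_lt_one hq0 hq1).mul_right (Real.exp (lam * β * T)))
  all_goals
    obtain ⟨hTm, hTmT⟩ := pow_mul_mem_Icc hq0 hq1.le hT m
    have hvm : ∀ s ∈ Icc 0 (q ^ m * T), 0 ≤ v s ∧ v s ≤ β := fun s hs =>
      hv s (Icc_subset_Icc_right hTmT hs)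
  · exact mul_nonneg (by positivity) (qGamma_nonneg hq0 hq1.le hlam hTm fun s hs => (hvm s hs).1)
  · gcongr
    exact (qGamma_le_exp hq0 hq1 hlam hTm hvm).trans (by gcongr)

lemma qGamma_sub_one_le_tsum (hq0 : 0 ≤ q) (hq1 : q < 1)
    (hlam : 0 ≤ lam) (hT : 0 ≤ T) (hv : ∀ s ∈ Icc 0 T, 0 ≤ v s ∧ v s ≤ β) :
    qGamma q lam v T - 1
      ≤ (1 - q) * lam * β * T * ∑' m : ℕ, q ^ m * qGamma q lam v (q ^ m * T) := by
  have hvm : ∀ m : ℕ, ∀ s ∈ Icc 0 (q ^ m * T), 0 ≤ v s ∧ v s ≤ β := fun m s hs =>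
    hv s (Icc_subset_Icc_right (pow_mul_mem_Icc hq0 hq1.le hT m).2 hs)
  have hTm : ∀ m : ℕ, 0 ≤ q ^ m * T := fun m => by positivity
  have hβ : 0 ≤ β := (hv T ⟨hT, le_rfl⟩).1.trans (hv T ⟨hT, le_rfl⟩).2
  set G : ℕ → ℝ := fun m => qGamma q lam v (q ^ m * T)
  have hstep : ∀ m, G m - G (m + 1) ≤ (1 - q) * lam * β * T * (q ^ m * G m) := fun m => by
    have := qGamma_sub_qGamma_mul_le hq0 hq1 hlam (hTm m) (hvm m)
    simp only [G, pow_succ', mul_assoc] at this ⊢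
    linarith
  have htel : ∀ N, G 0 - Real.exp (lam * β * (q ^ N * T))
      ≤ (1 - q) * lam * β * T * ∑' m, q ^ m * G m := fun N => by
    have hq : 0 ≤ 1 - q := by linarith
    have := sub_le_tsum_of_sub_succ_le
      ((summable_pow_mul_qGamma_pow_mul hq0 hq1 hlam hT hv).mul_left _)
      (fun m => mul_nonneg (by positivity) (mul_nonneg (pow_nonneg hq0 m)
        (qGamma_nonneg hq0 hq1.le hlam (hTm m) fun s hs => (hvm m s hs).1))) hstep N
    rw [tsum_mul_left] at this
    linarith [qGamma_le_exp hq0 hq1 hlam (hTm N) (hvm N)]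
  have hlim : Tendsto (fun N : ℕ => G 0 - Real.exp (lam * β * (q ^ N * T))) atTop
      (𝓝 (G 0 - 1)) := by
    simpa using tendsto_const_nhds.sub
      (((tendsto_pow_atTop_nhds_zero_of_lt_one hq0 hq1).mul_const T).const_mul (lam * β)).rexp
  simpa [G] using le_of_tendsto' hlim htel

end

theorem kernel_jackson_lower_bound_general
    (q T α β lam : ℝ) (v : ℝ → ℝ)
    (hq0 : 0 < q) (hq1 : q < 1) (hT : 0 < T)
    (hα : 0 < α)
    (hv : ∀ t ∈ Set.Icc (0 : ℝ) T, α ≤ v t ∧ v t ≤ β)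
    (hlam : 0 < lam) :
    qGamma q lam v T / (lam * β) - 1 / (lam * β)
      ≤ jacksonIntegral q T (qGamma q lam v) := by
  have hvT := hv T ⟨hT.le, le_rfl⟩
  have hβ : 0 < β := hα.trans_le (hvT.1.trans hvT.2)
  have hv' : ∀ s ∈ Icc 0 T, 0 ≤ v s ∧ v s ≤ β := fun s hs =>
    ⟨hα.le.trans (hv s hs).1, (hv s hs).2⟩
  rw [div_sub_div_same, div_le_iff₀ (by positivity), jacksonIntegral]
  calc qGamma q lam v T - 1
      ≤ (1 - q) * lam * β * T * ∑' m : ℕ, q ^ m * qGamma q lam v (q ^ m * T) :=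
        qGamma_sub_one_le_tsum hq0.le hq1 hlam.le hT.le hv'
    _ = _ := by ring

/-- Lower bound for the Jackson integral of the kernel (inequality (2.9) of the paper):
for `λ > 0`, `∫_0^T Γ_{υ,λ}(s) d_q s ≥ Γ_{υ,λ}(T)/(λβ) − 1/(λβ)` (since `Γ_{υ,λ}(0) = 1`). -/
theorem kernel_jackson_lower_bound
    (q T α β lam : ℝ) (v : ℝ → ℝ)
    (hq0 : 0 < q) (hq1 : q < 1) (hT : 0 < T)
    (hvcont : ContinuousOn v (Set.Icc 0 T))
    (hα : 0 < α)
    (hv : ∀ t ∈ Set.Icc (0 : ℝ) T, α ≤ v t ∧ v t ≤ β)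
    (hlam : 0 < lam) :
    qGamma q lam v T / (lam * β) - 1 / (lam * β)
      ≤ jacksonIntegral q T (qGamma q lam v) :=
  kernel_jackson_lower_bound_general q T α β lam v hq0 hq1 hT hα hv hlam
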